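/- Let θ*_A and θ*_D be unit vectors in ℝ² with θ*_A ≠ θ*_D, let 0 < α < 1/2, and let θ_C = θ_C(θ*_A, θ*_D) be the aggregate of the truthfully reported vectors. Then the ratio μ({t : sign(⟪θ_C, v(t)⟫) ≠ sign(⟪θ*_A, v(t)⟫)}) / μ({t : sign(⟪θ*_A, v(t)⟫) ≠ sign(⟪θ*_D, v(t)⟫)}) equals arccos(⟪θ_C, θ*_A⟫) / arccos(⟪θ*_D, θ*_A⟫), and the denominator probability is strictly positive. -/

import Mathlib

open Real MeasureTheory

/-- The unit direction vector `(cos t, sin t)` in the Euclidean plane. -/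
noncomputable def v (t : ℝ) : EuclideanSpace ℝ (Fin 2) :=
  (WithLp.equiv 2 (Fin 2 → ℝ)).symm ![Real.cos t, Real.sin t]

/-- The uniform probability measure on `[0, 2π]`. -/
noncomputable def μunif : Measure ℝ :=
  (ENNReal.ofReal (2 * Real.pi)⁻¹) • (volume.restrict (Set.Icc 0 (2 * Real.pi)))

/-- The aggregate vector `(α θ_D + (1−α) θ_A)/‖α θ_D + (1−α) θ_A‖`. -/
noncomputable def aggregate (α : ℝ) (θA θD : EuclideanSpace ℝ (Fin 2)) :
    EuclideanSpace ℝ (Fin 2) :=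
  (‖α • θD + (1 - α) • θA‖)⁻¹ • (α • θD + (1 - α) • θA)

/-
Write unit vectors as `v φ`; then `⟪v φ, v t⟫ = cos (t - φ)`, so two unit vectors at angle
`δ = arccos ⟪u, w⟫` classify `v t` differently exactly on two arcs of length `δ` per period,
up to finitely many boundary points. By `2π`-periodicity, the measure over `[0, 2π]` can be
computed over any period, giving `2δ`; the normalisation of `μunif` cancels in the ratio.
The aggregate is a unit vector since `‖α θ_D + (1 - α) θ_A‖ ≥ (1 - α) - |α| > 0`
for `α < 1/2`.
-/

open Set Function
open scoped RealInnerProductSpace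

lemma Real.measurable_sign : Measurable Real.sign :=
  Measurable.ite measurableSet_Iio measurable_const
    (Measurable.ite measurableSet_Ioi measurable_const measurable_const)

lemma inner_v (u : EuclideanSpace ℝ (Fin 2)) (t : ℝ) :
    ⟪u, v t⟫ = u 0 * cos t + u 1 * sin t := by
  simp [PiLp.inner_apply, Fin.sum_univ_two, v]
  ring

lemma inner_v_v (a b : ℝ) : ⟪v a, v b⟫ = cos (b - a) := by
  rw [inner_v, cos_sub]
  simp [v]
  ring

lemma exists_eq_v_of_norm_eq_one {u : EuclideanSpace ℝ (Fin 2)} (hu : ‖u‖ = 1) :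
    ∃ φ : ℝ, u = v φ := by
  set z : ℂ := ⟨u 0, u 1⟩
  have hz : ‖z‖ = 1 := by
    rw [← hu, Complex.norm_eq_sqrt_sq_add_sq, EuclideanSpace.norm_eq, Fin.sum_univ_two]
    simp [z]
  have hz0 : z ≠ 0 := norm_ne_zero_iff.mp (by simp [hz])
  refine ⟨Complex.arg z, ?_⟩
  ext i
  fin_cases i <;> simp [v, Complex.cos_arg hz0, Complex.sin_arg, hz, z]

lemma norm_smul_add_one_sub_smul_pos {E : Type*} [NormedAddCommGroup E] [NormedSpace ℝ E]
    {α : ℝ} (hα : α < 1 / 2) {u w : E} (hu : ‖u‖ = 1) (hw : ‖w‖ = 1) :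
    0 < ‖α • w + (1 - α) • u‖ :=
  calc 0 < (1 - α) - |α| := by cases abs_cases α <;> linarith
    _ = ‖(1 - α) • u‖ - ‖-(α • w)‖ := by
      rw [norm_neg, norm_smul, norm_smul, hu, hw, Real.norm_eq_abs, Real.norm_eq_abs,
        abs_of_pos (by linarith : 0 < 1 - α), mul_one, mul_one]
    _ ≤ ‖α • w + (1 - α) • u‖ := by
      rw [add_comm]; simpa using norm_sub_norm_le ((1 - α) • u) (-(α • w))

lemma norm_aggregate {α : ℝ} (hα : α < 1 / 2) {u w : EuclideanSpace ℝ (Fin 2)}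
    (hu : ‖u‖ = 1) (hw : ‖w‖ = 1) : ‖aggregate α u w‖ = 1 := by
  rw [aggregate, norm_smul, norm_inv, norm_norm,
    inv_mul_cancel₀ (norm_smul_add_one_sub_smul_pos hα hu hw).ne']

lemma zero_lt_arccos_inner {E : Type*} [NormedAddCommGroup E] [InnerProductSpace ℝ E]
    {u w : E} (hu : ‖u‖ = 1) (hw : ‖w‖ = 1) (hne : u ≠ w) : 0 < arccos ⟪u, w⟫ :=
  arccos_pos.mpr <| (real_inner_le_norm u w).trans_eq (by rw [hu, hw, one_mul]) |>.lt_of_ne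
    fun h => hne ((inner_eq_one_iff_of_norm_eq_one hu hw).mp h)

lemma volume_setOf_inter_Ioc_eq_of_periodic {P : ℝ → Prop} {T : ℝ} (hP : Periodic P T)
    (hPm : MeasurableSet {x | P x}) (hT : 0 < T) (a b : ℝ) :
    volume ({x | P x} ∩ Ioc a (a + T)) = volume ({x | P x} ∩ Ioc b (b + T)) := by
  refine (isAddFundamentalDomain_Ioc hT a).measure_set_eq (isAddFundamentalDomain_Ioc hT b)
    hPm ?_
  rintro ⟨_, n, rfl⟩
  ext x
  show P (n • T + x) ↔ P x
  rw [add_comm]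
  exact (hP.zsmul n x).to_iff

/-- Since `⟪v φ, v t⟫ = cos (t - φ)`, these are the `t` on which `v φ` and `v ψ` classify
`v t` differently. -/
def cosSignDisagree (φ ψ : ℝ) : Set ℝ := {t | sign (cos (t - φ)) ≠ sign (cos (t - ψ))}

lemma cosSignDisagree_comm (φ ψ : ℝ) : cosSignDisagree φ ψ = cosSignDisagree ψ φ := by
  ext t; exact ne_comm

lemma cosSignDisagree_add_int_mul_two_pi (φ ψ : ℝ) (k : ℤ) :
    cosSignDisagree φ (ψ + k * (2 * π)) = cosSignDisagree φ ψ := by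
  ext t
  simp only [cosSignDisagree, mem_ofPred_eq, ← sub_sub, cos_sub_int_mul_two_pi]

lemma measurableSet_cosSignDisagree (φ ψ : ℝ) : MeasurableSet (cosSignDisagree φ ψ) := by
  refine (measurableSet_eq_fun ?_ ?_).compl <;>
    exact Real.measurable_sign.comp (measurable_cos.comp (measurable_id.sub measurable_const))

lemma periodic_mem_cosSignDisagree (φ ψ : ℝ) :
    Periodic (· ∈ cosSignDisagree φ ψ) (2 * π) := by
  intro t
  simp only [cosSignDisagree, mem_ofPred_eq, add_sub_right_comm, cos_add_two_pi]

lemma sign_cos_of_mem_Ioo {x : ℝ} (h₁ : -(π / 2) < x) (h₂ : x < π / 2) : sign (cos x) = 1 :=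
  sign_of_pos (cos_pos_of_mem_Ioo ⟨h₁, h₂⟩)

lemma sign_cos_of_pi_div_two_lt {x : ℝ} (h₁ : π / 2 < x) (h₂ : x < π + π / 2) :
    sign (cos x) = -1 :=
  sign_of_neg (cos_neg_of_pi_div_two_lt_of_lt h₁ h₂)

lemma sign_cos_of_lt_neg_pi_div_two {x : ℝ} (h₁ : -(π + π / 2) < x) (h₂ : x < -(π / 2)) :
    sign (cos x) = -1 := by
  rw [← cos_neg]; exact sign_cos_of_pi_div_two_lt (by linarith) (by linarith)

lemma Ioo_union_Ioo_subset_cosSignDisagree {φ δ : ℝ} (hδ : δ ≤ π) :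
    Ioo (φ - π / 2) (φ + δ - π / 2) ∪ Ioo (φ + π / 2) (φ + δ + π / 2) ⊆
      cosSignDisagree φ (φ + δ) ∩ Ioc (φ - π / 2) (φ - π / 2 + 2 * π) := by
  have hπ := pi_pos
  rintro t (⟨h₁, h₂⟩ | ⟨h₁, h₂⟩)
  · refine ⟨?_, by linarith, by linarith⟩
    rw [cosSignDisagree, mem_ofPred_eq, sign_cos_of_mem_Ioo (by linarith) (by linarith),
      sign_cos_of_lt_neg_pi_div_two (by linarith) (by linarith)]
    norm_num
  · refine ⟨?_, by linarith, by linarith⟩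
    rw [cosSignDisagree, mem_ofPred_eq, sign_cos_of_pi_div_two_lt (by linarith) (by linarith),
      sign_cos_of_mem_Ioo (by linarith) (by linarith)]
    norm_num

lemma cosSignDisagree_inter_Ioc_subset {φ δ : ℝ} (hδ : 0 ≤ δ) :
    cosSignDisagree φ (φ + δ) ∩ Ioc (φ - π / 2) (φ - π / 2 + 2 * π) ⊆
      (Ioo (φ - π / 2) (φ + δ - π / 2) ∪ Ioo (φ + π / 2) (φ + δ + π / 2)) ∪
        {φ + δ - π / 2, φ + π / 2, φ + δ + π / 2, φ - π / 2 + 2 * π} := by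
  rintro t ⟨ht, h₁, h₂⟩
  simp only [mem_union, mem_Ioo, mem_insert_iff, mem_singleton_iff]
  by_contra! h
  obtain ⟨⟨h₃, h₄⟩, h₅, h₆, h₇, h₈⟩ := h
  apply ht
  rcases lt_or_gt_of_ne h₆ with h₉ | h₉
  · have := lt_of_le_of_ne (h₃ h₁) h₅.symm
    rw [sign_cos_of_mem_Ioo (by linarith) (by linarith),
      sign_cos_of_mem_Ioo (by linarith) (by linarith)]
  · have := lt_of_le_of_ne (h₄ h₉) h₇.symm
    have := lt_of_le_of_ne h₂ h₈
    rw [sign_cos_of_pi_div_two_lt (by linarith) (by linarith),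
      sign_cos_of_pi_div_two_lt (by linarith) (by linarith)]

lemma volume_cosSignDisagree_inter_Ioc {φ δ : ℝ} (hδ₀ : 0 ≤ δ) (hδπ : δ ≤ π) :
    volume (cosSignDisagree φ (φ + δ) ∩ Ioc (φ - π / 2) (φ - π / 2 + 2 * π)) =
      ENNReal.ofReal (2 * δ) := by
  have hE : volume (Ioo (φ - π / 2) (φ + δ - π / 2) ∪ Ioo (φ + π / 2) (φ + δ + π / 2)) =
      ENNReal.ofReal (2 * δ) := by
    rw [measure_union _ measurableSet_Ioo, Real.volume_Ioo, Real.volume_Ioo,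
      ← ENNReal.ofReal_add (by linarith) (by linarith)]
    · ring_nf
    · exact disjoint_left.mpr fun x hx₁ hx₂ => by linarith [hx₁.2, hx₂.1, pi_pos]
  refine le_antisymm ?_ (hE ▸ measure_mono (Ioo_union_Ioo_subset_cosSignDisagree hδπ))
  calc _ ≤ _ := measure_mono (cosSignDisagree_inter_Ioc_subset hδ₀)
    _ ≤ _ := measure_union_le _ _
    _ = ENNReal.ofReal (2 * δ) := by rw [hE, (toFinite _).measure_zero, add_zero]

lemma volume_cosSignDisagree_add_inter_Icc {φ δ : ℝ} (hδ₀ : 0 ≤ δ) (hδπ : δ ≤ π) :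
    volume (cosSignDisagree φ (φ + δ) ∩ Icc 0 (2 * π)) = ENNReal.ofReal (2 * δ) := by
  rw [← measure_congr ((ae_eq_refl _).inter Ioc_ae_eq_Icc),
    ← volume_cosSignDisagree_inter_Ioc hδ₀ hδπ]
  simpa using volume_setOf_inter_Ioc_eq_of_periodic (periodic_mem_cosSignDisagree φ (φ + δ))
    (measurableSet_cosSignDisagree φ (φ + δ)) two_pi_pos 0 (φ - π / 2)

lemma volume_cosSignDisagree_inter_Icc (φ ψ : ℝ) :
    volume (cosSignDisagree φ ψ ∩ Icc 0 (2 * π)) =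
      ENNReal.ofReal (2 * arccos (cos (ψ - φ))) := by
  set δ := arccos (cos (ψ - φ))
  have hδ₀ : 0 ≤ δ := arccos_nonneg _
  have hδπ : δ ≤ π := arccos_le_pi _
  have hcos : cos δ = cos (ψ - φ) := cos_arccos (neg_one_le_cos _) (cos_le_one _)
  -- `ψ ≡ φ ± δ (mod 2π)`; in the `-` case, swap the roles of `φ` and `ψ`.
  obtain ⟨k, hk | hk⟩ := cos_eq_cos_iff.mp hcos
  · rw [show ψ = φ + δ + k * (2 * π) by linarith, cosSignDisagree_add_int_mul_two_pi,
      volume_cosSignDisagree_add_inter_Icc hδ₀ hδπ]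
  · rw [show ψ = φ - δ + k * (2 * π) by linarith, cosSignDisagree_add_int_mul_two_pi,
      cosSignDisagree_comm, ← volume_cosSignDisagree_add_inter_Icc (φ := φ - δ) hδ₀ hδπ,
      sub_add_cancel]

lemma volume_setOf_sign_inner_v_ne {u w : EuclideanSpace ℝ (Fin 2)} (hu : ‖u‖ = 1)
    (hw : ‖w‖ = 1) :
    volume {t ∈ Icc 0 (2 * π) | sign ⟪u, v t⟫ ≠ sign ⟪w, v t⟫} =
      ENNReal.ofReal (2 * arccos ⟪u, w⟫) := by
  obtain ⟨φ, rfl⟩ := exists_eq_v_of_norm_eq_one hu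
  obtain ⟨ψ, rfl⟩ := exists_eq_v_of_norm_eq_one hw
  rw [inner_v_v, ← volume_cosSignDisagree_inter_Icc, inter_comm]
  simp only [inner_v_v]
  rfl

lemma μunif_sep (p : ℝ → Prop) :
    μunif {t ∈ Icc 0 (2 * π) | p t} =
      ENNReal.ofReal (2 * π)⁻¹ * volume {t ∈ Icc 0 (2 * π) | p t} := by
  rw [μunif, Measure.smul_apply, Measure.restrict_apply' measurableSet_Icc, smul_eq_mul,
    inter_eq_self_of_subset_left (sep_subset _ _)]

theorem stmt_1_general (α : ℝ) (hα' : α < 1 / 2)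
    (θAstar θDstar : EuclideanSpace ℝ (Fin 2))
    (hA : ‖θAstar‖ = 1) (hD : ‖θDstar‖ = 1) (hne : θAstar ≠ θDstar) :
    0 < μunif {t ∈ Set.Icc (0 : ℝ) (2 * Real.pi) |
        Real.sign (inner ℝ θAstar (v t) : ℝ) ≠ Real.sign (inner ℝ θDstar (v t) : ℝ)} ∧
    μunif {t ∈ Set.Icc (0 : ℝ) (2 * Real.pi) |
        Real.sign (inner ℝ (aggregate α θAstar θDstar) (v t) : ℝ) ≠
          Real.sign (inner ℝ θAstar (v t) : ℝ)} /
      μunif {t ∈ Set.Icc (0 : ℝ) (2 * Real.pi) |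
        Real.sign (inner ℝ θAstar (v t) : ℝ) ≠ Real.sign (inner ℝ θDstar (v t) : ℝ)} =
      ENNReal.ofReal
        (Real.arccos (inner ℝ (aggregate α θAstar θDstar) θAstar : ℝ) /
          Real.arccos (inner ℝ θDstar θAstar : ℝ)) := by
  rw [μunif_sep, μunif_sep, volume_setOf_sign_inner_v_ne hA hD,
    volume_setOf_sign_inner_v_ne (norm_aggregate hα' hA hD) hA, real_inner_comm θDstar θAstar]
  have hc : ENNReal.ofReal (2 * π)⁻¹ ≠ 0 := ENNReal.ofReal_ne_zero_iff.mpr (by positivity)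
  have hb := zero_lt_arccos_inner hD hA hne.symm
  refine ⟨ENNReal.mul_pos hc (ENNReal.ofReal_pos.mpr (by positivity)).ne', ?_⟩
  rw [ENNReal.mul_div_mul_left _ _ hc ENNReal.ofReal_ne_top,
    ← ENNReal.ofReal_div_of_pos (by positivity), mul_div_mul_left _ _ two_ne_zero]

/-- Appendix B identity: among disputed cases, the fraction where the minority prevails
equals `arccos(θ_C · θ*_A)/arccos(θ*_D · θ*_A)`, and the probability of dispute is positive. -/
theorem stmt_1 (α : ℝ) (hα : 0 < α) (hα' : α < 1 / 2)
    (θAstar θDstar : EuclideanSpace ℝ (Fin 2))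
    (hA : ‖θAstar‖ = 1) (hD : ‖θDstar‖ = 1) (hne : θAstar ≠ θDstar) :
    0 < μunif {t ∈ Set.Icc (0 : ℝ) (2 * Real.pi) |
        Real.sign (inner ℝ θAstar (v t) : ℝ) ≠ Real.sign (inner ℝ θDstar (v t) : ℝ)} ∧
    μunif {t ∈ Set.Icc (0 : ℝ) (2 * Real.pi) |
        Real.sign (inner ℝ (aggregate α θAstar θDstar) (v t) : ℝ) ≠
          Real.sign (inner ℝ θAstar (v t) : ℝ)} /
      μunif {t ∈ Set.Icc (0 : ℝ) (2 * Real.pi) |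
        Real.sign (inner ℝ θAstar (v t) : ℝ) ≠ Real.sign (inner ℝ θDstar (v t) : ℝ)} =
      ENNReal.ofReal
        (Real.arccos (inner ℝ (aggregate α θAstar θDstar) θAstar : ℝ) /
          Real.arccos (inner ℝ θDstar θAstar : ℝ)) :=
  stmt_1_general α hα' θAstar θDstar hA hD hne
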